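/- There exists an absolute constant $c > 0$ (independent of $n$) such that for every integer $n \ge 1$ and every $L > 0$, the $n$-dimensional simplex $A = \{(x_1, \dots, x_n) \in \mathbb{R}^n : x_j \ge 0 \text{ for all } j, \ \sum_{j=1}^n x_j \le L\}$ satisfies $\mu(A - A) \ge c\, \frac{\mu(A+A)^2}{\sqrt{n}\, \mu(A)}$; that is, the bound $\mu(A-A) \ll \mu(A+B)^2 / (\sqrt{n}\,\mu(A))$ is tight up to an absolute constant. -/

import Mathlib

/-!
`A + A = 2A` has volume `2ⁿ μ(A)`. For each `s ⊆ {1, …, n}`, `A - A` contains the set of `x`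
with `x ≥ 0` on `s`, `x ≤ 0` off `s`, and both the positive and the negative coordinates summing
to at most `L`: a product of simplices of dimensions `|s|` and `n - |s|`, of volume
`(n choose |s|) μ(A)`. These pieces overlap only in coordinate hyperplanes, so by Vandermonde
`μ(A - A) ≥ (2n choose n) μ(A) ≥ 4ⁿ μ(A) / (2√n)`, which is the claim with `c = 1/2`.
-/

open MeasureTheory Pointwise Finset

lemma Convex.addHaar_add_self {E : Type*} [NormedAddCommGroup E] [NormedSpace ℝ E]
    [MeasurableSpace E] [BorelSpace E] [FiniteDimensional ℝ E] (μ : Measure E)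
    [μ.IsAddHaarMeasure] {s : Set E} (hs : Convex ℝ s) :
    μ (s + s) = 2 ^ Module.finrank ℝ E * μ s := by
  rw [← one_smul ℝ s, ← hs.add_smul zero_le_one zero_le_one, one_add_one_eq_two,
    Measure.addHaar_smul, one_smul, abs_of_nonneg (by positivity), ENNReal.ofReal_pow zero_le_two,
    ENNReal.ofReal_ofNat]

lemma sum_choose_card_eq_centralBinom (ι : Type*) [Fintype ι] :
    ∑ s : Finset ι, (Fintype.card ι).choose s.card = (Fintype.card ι).centralBinom := by
  rw [← powerset_univ, sum_powerset_apply_card, card_univ, Nat.centralBinom_eq_two_mul_choose,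
    ← Nat.sum_range_choose_sq]
  simp only [smul_eq_mul, sq]

lemma sixteen_pow_le_four_mul_mul_centralBinom_sq {n : ℕ} (hn : 1 ≤ n) :
    16 ^ n ≤ 4 * n * n.centralBinom ^ 2 := by
  induction n, hn using Nat.le_induction with
  | base => simp [Nat.centralBinom, Nat.choose]
  | succ n hn ih =>
    have hstep := Nat.succ_mul_centralBinom_succ n
    refine Nat.le_of_mul_le_mul_left (c := (n + 1) ^ 2) ?_ (by positivity)
    calc (n + 1) ^ 2 * 16 ^ (n + 1) = 16 * (n + 1) ^ 2 * 16 ^ n := by ring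
      _ ≤ 16 * (n + 1) ^ 2 * (4 * n * n.centralBinom ^ 2) := by gcongr
      _ = (4 * n * (n + 1)) * (16 * (n + 1) * n.centralBinom ^ 2) := by ring
      _ ≤ (2 * n + 1) ^ 2 * (16 * (n + 1) * n.centralBinom ^ 2) := by gcongr; nlinarith
      _ = (n + 1) ^ 2 * (4 * (n + 1) * (n + 1).centralBinom ^ 2) := by
        rw [show (n + 1) ^ 2 * (4 * (n + 1) * (n + 1).centralBinom ^ 2)
          = 4 * (n + 1) * ((n + 1) * (n + 1).centralBinom) ^ 2 by ring, hstep]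
        ring

lemma four_pow_le_two_mul_sqrt_mul_centralBinom {n : ℕ} (hn : 1 ≤ n) :
    (4 : ℝ) ^ n ≤ 2 * √n * n.centralBinom := by
  rw [← pow_le_pow_iff_left₀ (by positivity) (by positivity) two_ne_zero, mul_pow, mul_pow,
    Real.sq_sqrt n.cast_nonneg, ← pow_mul, mul_comm n, pow_mul]
  exact_mod_cast (by norm_num; linarith [sixteen_pow_le_four_mul_mul_centralBinom_sq hn] :
    (4 ^ 2) ^ n ≤ 2 ^ 2 * n * n.centralBinom ^ 2)

lemma pow_div_factorial_mul_pow_div_factorial (x : ℝ) {k n : ℕ} (hk : k ≤ n) :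
    x ^ k / k.factorial * (x ^ (n - k) / (n - k).factorial)
      = n.choose k * (x ^ n / n.factorial) := by
  rw [Nat.cast_choose ℝ hk, ← Nat.add_sub_cancel' hk, pow_add, Nat.add_sub_cancel_left]
  field_simp

lemma integral_sub_pow_div_factorial (L : ℝ) (n : ℕ) :
    ∫ t in (0 : ℝ)..L, (L - t) ^ n / n.factorial = L ^ (n + 1) / (n + 1).factorial := by
  simp [intervalIntegral.integral_comp_sub_left (fun u => u ^ n / n.factorial) L,
    Nat.factorial_succ]
  field_simp

def solidSimplex (ι : Type*) [Fintype ι] (L : ℝ) : Set (ι → ℝ) :=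
  {x | (∀ j, 0 ≤ x j) ∧ ∑ j, x j ≤ L}

section solidSimplex

variable {ι : Type*} [Fintype ι] {L : ℝ}

lemma solidSimplex_eq_empty (hL : L < 0) : solidSimplex ι L = ∅ :=
  Set.eq_empty_of_forall_notMem fun _ hx =>
    (hx.2.trans_lt hL).not_ge (sum_nonneg fun j _ => hx.1 j)

lemma isClosed_solidSimplex : IsClosed (solidSimplex ι L) := by
  simp only [solidSimplex, Set.ofPred_and, Set.ofPred_forall]
  exact (isClosed_iInter fun j => isClosed_le continuous_const (continuous_apply j)).inter
    (isClosed_le (continuous_finsetSum _ fun j _ => continuous_apply j) continuous_const)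

lemma measurableSet_solidSimplex : MeasurableSet (solidSimplex ι L) :=
  isClosed_solidSimplex.measurableSet

lemma solidSimplex_subset_Icc : solidSimplex ι L ⊆ Set.Icc 0 (fun _ => L) :=
  fun _ hx => ⟨hx.1, fun i => (single_le_sum (fun j _ => hx.1 j) (mem_univ i)).trans hx.2⟩

lemma isBounded_solidSimplex : Bornology.IsBounded (solidSimplex ι L) :=
  Metric.isBounded_Icc _ _ |>.subset solidSimplex_subset_Icc

lemma convex_solidSimplex : Convex ℝ (solidSimplex ι L) := by
  rintro x ⟨hx₀, hx⟩ y ⟨hy₀, hy⟩ a b ha hb hab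
  refine ⟨fun j => add_nonneg (mul_nonneg ha (hx₀ j)) (mul_nonneg hb (hy₀ j)), ?_⟩
  calc ∑ j, (a • x + b • y) j = a * ∑ j, x j + b * ∑ j, y j := by
        simp only [Pi.add_apply, Pi.smul_apply, smul_eq_mul, sum_add_distrib, mul_sum]
    _ ≤ a * L + b * L := by gcongr
    _ = L := by rw [← add_mul, hab, one_mul]

lemma dite_mem_solidSimplex {p : ι → Prop} [DecidablePred p] {u : {j // p j} → ℝ}
    (hu : u ∈ solidSimplex _ L) :
    (fun j => if h : p j then u ⟨j, h⟩ else 0) ∈ solidSimplex ι L := by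
  refine ⟨fun j => ?_, ?_⟩
  · dsimp only
    split_ifs with h
    exacts [hu.1 _, le_rfl]
  · have hin (i : {j // p j}) : (if h : p i then u ⟨i, h⟩ else 0) = u i := dif_pos i.2
    have hout (i : {j // ¬p j}) : (if h : p i then u ⟨i, h⟩ else 0) = 0 := dif_neg i.2
    rw [← Fintype.sum_subtype_add_sum_subtype p]
    simpa only [hin, hout, sum_const_zero, add_zero] using hu.2

end solidSimplex

lemma preimage_cons_solidSimplex {n : ℕ} (L t : ℝ) :
    (fun y : Fin n → ℝ => Fin.cons t y) ⁻¹' solidSimplex (Fin (n + 1)) L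
      = {y | 0 ≤ t ∧ y ∈ solidSimplex (Fin n) (L - t)} := by
  ext y
  simp only [solidSimplex, Set.mem_preimage, Set.mem_ofPred_eq, Fin.forall_fin_succ,
    Fin.sum_univ_succ, Fin.cons_zero, Fin.cons_succ, le_sub_iff_add_le', and_assoc]

lemma volume_solidSimplex_fin (n : ℕ) {L : ℝ} (hL : 0 ≤ L) :
    volume (solidSimplex (Fin n) L) = ENNReal.ofReal (L ^ n / n.factorial) := by
  induction n generalizing L with
  | zero =>
    have : solidSimplex (Fin 0) L = Set.univ := by ext x; simp [solidSimplex, hL]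
    simp [this, volume_pi]
  | succ n ih =>
    have hslice (t : ℝ) : volume {y | 0 ≤ t ∧ y ∈ solidSimplex (Fin n) (L - t)}
        = (Set.Icc 0 L).indicator (fun t => ENNReal.ofReal ((L - t) ^ n / n.factorial)) t := by
      by_cases ht : t ∈ Set.Icc 0 L
      · simp [ht.1, ih (sub_nonneg.2 ht.2), ht]
      · rw [Set.indicator_of_notMem ht]
        rcases not_and_or.1 ht with ht | ht
        · simp [ht]
        · simp [solidSimplex_eq_empty (sub_neg.2 (not_le.1 ht))]
    have hcons := (volume_preserving_piFinSuccAbove (fun _ : Fin (n + 1) => ℝ) 0).symm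
    rw [← hcons.measure_preimage measurableSet_solidSimplex.nullMeasurableSet,
      Measure.volume_eq_prod, Measure.prod_apply (hcons.measurable measurableSet_solidSimplex)]
    have hsection (t : ℝ) : Prod.mk t ⁻¹'
        ((MeasurableEquiv.piFinSuccAbove (fun _ : Fin (n + 1) => ℝ) 0).symm ⁻¹'
          solidSimplex (Fin (n + 1)) L) = {y | 0 ≤ t ∧ y ∈ solidSimplex (Fin n) (L - t)} := by
      rw [← preimage_cons_solidSimplex]
      ext y
      simp [Fin.consEquiv]
    simp only [hsection, hslice]
    rw [lintegral_indicator measurableSet_Icc, ← ofReal_integral_eq_lintegral_ofReal,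
      integral_Icc_eq_integral_Ioc, ← intervalIntegral.integral_of_le hL,
      integral_sub_pow_div_factorial]
    · exact (by fun_prop : Continuous fun t : ℝ => (L - t) ^ n / n.factorial).integrableOn_Icc
    · filter_upwards [ae_restrict_mem measurableSet_Icc] with t ht
      have := sub_nonneg.2 ht.2
      positivity

lemma preimage_piCongrLeft_solidSimplex {ι κ : Type*} [Fintype ι] [Fintype κ] (e : ι ≃ κ)
    (L : ℝ) :
    MeasurableEquiv.piCongrLeft (fun _ => ℝ) e ⁻¹' solidSimplex κ L = solidSimplex ι L := by
  ext x
  simp only [solidSimplex, Set.mem_preimage, Set.mem_ofPred_eq, ← e.forall_congr_right,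
    ← e.sum_comp, MeasurableEquiv.piCongrLeft_apply_apply]

lemma volume_solidSimplex {ι : Type*} [Fintype ι] {L : ℝ} (hL : 0 ≤ L) :
    volume (solidSimplex ι L)
      = ENNReal.ofReal (L ^ Fintype.card ι / (Fintype.card ι).factorial) := by
  have he := volume_measurePreserving_piCongrLeft (fun _ => ℝ) (Fintype.equivFin ι).symm
  rw [← he.measure_preimage measurableSet_solidSimplex.nullMeasurableSet,
    preimage_piCongrLeft_solidSimplex, volume_solidSimplex_fin _ hL]

section orthantPiece

variable {ι : Type*} [Fintype ι] [DecidableEq ι]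

def orthantSplit (s : Finset ι) (x : ι → ℝ) :
    ({j // j ∈ s} → ℝ) × ({j // j ∉ s} → ℝ) :=
  (fun j => x j, fun j => -x j)

lemma measurePreserving_orthantSplit (s : Finset ι) :
    MeasurePreserving (orthantSplit s) volume volume := by
  have hneg : MeasurePreserving (Prod.map id Neg.neg)
      (volume : Measure (({j // j ∈ s} → ℝ) × ({j // j ∉ s} → ℝ))) volume :=
    (MeasurePreserving.id volume).prod (Measure.measurePreserving_neg volume)
  -- `convert` identifies the two `Fintype` instances on `{j // j ∈ s}` (via `Finset` and via
  -- `DecidablePred`), which are not definitionally equal.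
  exact hneg.comp
    (by convert volume_preserving_piEquivPiSubtypeProd (fun _ : ι => ℝ) (· ∈ s); rfl)

def orthantPiece (s : Finset ι) (L : ℝ) : Set (ι → ℝ) :=
  orthantSplit s ⁻¹' (solidSimplex _ L ×ˢ solidSimplex _ L)

lemma volume_orthantPiece (s : Finset ι) {L : ℝ} (hL : 0 ≤ L) :
    volume (orthantPiece s L) = (Fintype.card ι).choose s.card • volume (solidSimplex ι L) := by
  rw [orthantPiece, (measurePreserving_orthantSplit s).measure_preimage
    (measurableSet_solidSimplex.prod measurableSet_solidSimplex).nullMeasurableSet,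
    Measure.volume_eq_prod, Measure.prod_prod, volume_solidSimplex hL, volume_solidSimplex hL,
    volume_solidSimplex hL, Fintype.card_subtype_compl, Fintype.card_coe,
    ← ENNReal.ofReal_mul (by positivity), pow_div_factorial_mul_pow_div_factorial L
      (card_le_univ s), nsmul_eq_mul, ENNReal.ofReal_mul (by positivity), ENNReal.ofReal_natCast]

lemma orthantPiece_subset_sub (s : Finset ι) (L : ℝ) :
    orthantPiece s L ⊆ solidSimplex ι L - solidSimplex ι L := by
  rintro x ⟨hpos, hneg⟩
  refine ⟨_, dite_mem_solidSimplex (p := (· ∈ s)) (by convert hpos), _,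
    dite_mem_solidSimplex (p := (· ∉ s)) (by convert hneg), ?_⟩
  funext j
  by_cases hj : j ∈ s <;> simp [orthantSplit, hj]

lemma nonneg_of_mem_orthantPiece {s : Finset ι} {L : ℝ} {x : ι → ℝ}
    (hx : x ∈ orthantPiece s L) {j : ι} (hj : j ∈ s) : 0 ≤ x j :=
  hx.1.1 ⟨j, hj⟩

lemma nonpos_of_mem_orthantPiece {s : Finset ι} {L : ℝ} {x : ι → ℝ}
    (hx : x ∈ orthantPiece s L) {j : ι} (hj : j ∉ s) : x j ≤ 0 :=
  neg_nonneg.1 (hx.2.1 ⟨j, hj⟩)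

lemma pairwise_aedisjoint_orthantPiece (L : ℝ) :
    Pairwise (Function.onFun (AEDisjoint volume) fun s : Finset ι => orthantPiece s L) := by
  intro s t hst
  obtain ⟨j, hj⟩ : ∃ j, ¬(j ∈ s ↔ j ∈ t) := by
    by_contra! h
    exact hst (Finset.ext h)
  refine measure_mono_null (t := {x | x j = 0}) (fun x ⟨hxs, hxt⟩ => ?_) ?_
  · by_cases hjs : j ∈ s
    · exact le_antisymm (nonpos_of_mem_orthantPiece hxt (by tauto))
        (nonneg_of_mem_orthantPiece hxs hjs)
    · exact le_antisymm (nonpos_of_mem_orthantPiece hxs hjs)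
        (nonneg_of_mem_orthantPiece hxt (by tauto))
  · rw [volume_pi]
    exact Measure.pi_hyperplane _ j 0

end orthantPiece

lemma centralBinom_nsmul_volume_le_volume_sub (ι : Type*) [Fintype ι] {L : ℝ} (hL : 0 ≤ L) :
    (Fintype.card ι).centralBinom • volume (solidSimplex ι L)
      ≤ volume (solidSimplex ι L - solidSimplex ι L) := by
  classical
  have hmeas (s : Finset ι) : NullMeasurableSet (orthantPiece s L) :=
    ((measurePreserving_orthantSplit s).measurable
      (measurableSet_solidSimplex.prod measurableSet_solidSimplex)).nullMeasurableSet
  calc (Fintype.card ι).centralBinom • volume (solidSimplex ι L)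
      = ∑ s : Finset ι, volume (orthantPiece s L) := by
        simp only [volume_orthantPiece _ hL, ← sum_smul, sum_choose_card_eq_centralBinom]
    _ = volume (⋃ s : Finset ι, orthantPiece s L) := by
        rw [measure_iUnion₀ (pairwise_aedisjoint_orthantPiece L) hmeas, tsum_fintype]
    _ ≤ _ := measure_mono (Set.iUnion_subset fun s => orthantPiece_subset_sub s L)

theorem simplex_tightness :
    ∃ c : ℝ, 0 < c ∧ ∀ n : ℕ, 1 ≤ n → ∀ L : ℝ, 0 < L →
      ∀ A : Set (Fin n → ℝ),
        A = {x : Fin n → ℝ | (∀ j, 0 ≤ x j) ∧ ∑ j, x j ≤ L} →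
        c * (volume (A + A)).toReal ^ 2 / (Real.sqrt n * (volume A).toReal)
          ≤ (volume (A - A)).toReal := by
  refine ⟨1 / 2, by norm_num, fun n hn L hL A hA => ?_⟩
  obtain rfl : A = solidSimplex (Fin n) L := hA
  set V := (volume (solidSimplex (Fin n) L)).toReal with hV
  have hV_pos : 0 < V := by
    rw [hV, volume_solidSimplex_fin n hL.le, ENNReal.toReal_ofReal (by positivity)]
    positivity
  have hsum : (volume (solidSimplex (Fin n) L + solidSimplex (Fin n) L)).toReal = 2 ^ n * V := by
    simp [(convex_solidSimplex (ι := Fin n) (L := L)).addHaar_add_self volume, V]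
  have hdiff :
      n.centralBinom * V ≤ (volume (solidSimplex (Fin n) L - solidSimplex (Fin n) L)).toReal := by
    have hbdd := isBounded_solidSimplex (ι := Fin n) (L := L)
    have hfin := (hbdd.sub hbdd).measure_lt_top (μ := volume).ne
    simpa [V] using ENNReal.toReal_mono hfin (centralBinom_nsmul_volume_le_volume_sub (Fin n) hL.le)
  have hbinom := four_pow_le_two_mul_sqrt_mul_centralBinom hn
  rw [hsum, div_le_iff₀ (by positivity)]
  calc 1 / 2 * (2 ^ n * V) ^ 2 = 1 / 2 * 4 ^ n * V ^ 2 := by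
        rw [mul_pow, ← pow_mul, mul_comm n, pow_mul]; ring
    _ ≤ 1 / 2 * (2 * √n * n.centralBinom) * V ^ 2 := by gcongr
    _ = n.centralBinom * V * (√n * V) := by ring
    _ ≤ _ := by gcongr
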